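/- Let a > 0 and y ∈ ℝ. For t > e and B > 0 define J(t,B) = ∫_0^∞ 1_{|x − a·t| > B·√t} · ( x + y + (3/(2√2))·log t ) · exp( −√2·( x + y + (3/(2√2))·log t ) − ( x + y + (3/(2√2))·log t )²/(2t) + 3·( x + y + (3/(2√2))·log t )·(log t)/(2√2·t) + (√2+a)·x − a²·t/2 ) dx. Then for every ε > 0 there exists B > 0 such that limsup_{t→∞} J(t,B) ≤ ε. -/

import Mathlib

/-!
Completing the square, the exponent is `-(x - q)² / (2t) + g` with `q = a t - y` and
`g = -(3/2) log t + O(log² t / t) - (√2 + a) y`, and the prefactor is `(x - q) + M` with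
`M = a t + O(log t) ≥ 0`. Once `|y| ≤ B √t / 2`, the range `|x - a t| > B √t` lies in
`|x - q| > r := B √t / 2`, where `|(x - q) + M| ≤ (1 + M / r) |x - q|`. The Gaussian tail
`∫_{|u| > r} |u| e^{-u² / (2t)} du = 2t e^{-B² / 8}` then bounds `|J(t, B)|` by `e^{-B² / 8}` times
a prefactor tending to `(4a / B) e^{-(√2 + a) y}` as `t → ∞`, which is small for large `B`.
-/

open MeasureTheory Filter

/-- The first-moment integral of Proposition 7.3 of the paper, localising the relevant
Poisson points of the auxiliary process in a `√t`-neighbourhood of `a·t`. -/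
noncomputable def localisationIntegral (a y t B : ℝ) : ℝ :=
  ∫ x in Set.Ioi (0:ℝ),
    Set.indicator {x : ℝ | |x - a * t| > B * Real.sqrt t}
      (fun x =>
        (x + y + (3 / (2 * Real.sqrt 2)) * Real.log t) *
          Real.exp (-(Real.sqrt 2 * (x + y + (3 / (2 * Real.sqrt 2)) * Real.log t))
            - (x + y + (3 / (2 * Real.sqrt 2)) * Real.log t) ^ 2 / (2 * t)
            + 3 * (x + y + (3 / (2 * Real.sqrt 2)) * Real.log t) * Real.log t /
              (2 * Real.sqrt 2 * t)
            + (Real.sqrt 2 + a) * x - a ^ 2 * t / 2)) x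

open Set Real Topology

lemma hasDerivAt_neg_mul_exp_neg_sq_div {t : ℝ} (ht : t ≠ 0) (s : ℝ) :
    HasDerivAt (fun s => -t * exp (-(s ^ 2 / (2 * t)))) (s * exp (-(s ^ 2 / (2 * t)))) s := by
  have h : HasDerivAt (fun s => -(s ^ 2 / (2 * t))) (-(2 * s / (2 * t))) s := by
    simpa using ((hasDerivAt_pow 2 s).div_const (2 * t)).fun_neg
  refine (h.exp.const_mul (-t)).congr_deriv ?_
  field_simp

lemma integral_Ioi_mul_exp_neg_sq_div {t r : ℝ} (ht : 0 < t) (hr : 0 ≤ r) :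
    ∫ s in Ioi r, s * exp (-(s ^ 2 / (2 * t))) = t * exp (-(r ^ 2 / (2 * t))) := by
  have hlim : Tendsto (fun s => -t * exp (-(s ^ 2 / (2 * t)))) atTop (𝓝 0) := by
    simpa using (tendsto_exp_neg_atTop_nhds_zero.comp
      ((tendsto_pow_atTop two_ne_zero).atTop_div_const (by positivity))).const_mul (-t)
  rw [integral_Ioi_of_hasDerivAt_of_nonneg' (fun s _ => hasDerivAt_neg_mul_exp_neg_sq_div
    ht.ne' s) (fun s hs => mul_nonneg (hr.trans (le_of_lt hs)) (exp_pos _).le) hlim]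
  ring

noncomputable def absGaussianTail (t r : ℝ) : ℝ → ℝ :=
  {u | r < |u|}.indicator fun u => |u| * exp (-(u ^ 2 / (2 * t)))

lemma absGaussianTail_nonneg (t r u : ℝ) : 0 ≤ absGaussianTail t r u :=
  indicator_nonneg (fun _ _ => by positivity) u

lemma integrable_absGaussianTail {t : ℝ} (ht : 0 < t) (r : ℝ) :
    Integrable (absGaussianTail t r) := by
  have h := (integrable_mul_exp_neg_mul_sq (b := (2 * t)⁻¹) (by positivity)).abs
  refine (h.congr (Eventually.of_forall fun u => ?_)).indicator
    (measurableSet_lt measurable_const measurable_abs)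
  simp only [abs_mul, abs_exp, div_eq_inv_mul, neg_mul]

lemma integral_absGaussianTail {t r : ℝ} (ht : 0 < t) (hr : 0 ≤ r) :
    ∫ u, absGaussianTail t r u = 2 * t * exp (-(r ^ 2 / (2 * t))) := by
  have h : absGaussianTail t r = fun u =>
      (Ioi r).indicator (fun s => s * exp (-(s ^ 2 / (2 * t)))) |u| := by
    ext u
    simp only [absGaussianTail, indicator, mem_ofPred_eq, mem_Ioi, sq_abs]
  rw [h, integral_comp_abs, setIntegral_indicator measurableSet_Ioi, Ioi_inter_Ioi,
    sup_eq_right.mpr hr, integral_Ioi_mul_exp_neg_sq_div ht hr]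
  ring

lemma localisation_exponent_eq (a y L t x s : ℝ) (hs : s ≠ 0) (ht : t ≠ 0) :
    -(s * (x + y + (3 / (2 * s)) * L)) - (x + y + (3 / (2 * s)) * L) ^ 2 / (2 * t)
      + 3 * (x + y + (3 / (2 * s)) * L) * L / (2 * s * t) + (s + a) * x - a ^ 2 * t / 2
    = -((x - (a * t - y)) ^ 2 / (2 * t))
      + (-(3 / 2) * L + (3 / (2 * s)) ^ 2 * L ^ 2 / (2 * t) - (s + a) * y) := by
  field_simp
  ring

lemma abs_add_le_one_add_div_mul {u M r : ℝ} (hM : 0 ≤ M) (hr : 0 < r) (hu : r < |u|) :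
    |u + M| ≤ (1 + M / r) * |u| := by
  have : M ≤ M / r * |u| := by
    rw [div_mul_eq_mul_div, le_div_iff₀ hr]
    exact mul_le_mul_of_nonneg_left hu.le hM
  calc |u + M| ≤ |u| + M := (abs_add_le u M).trans_eq (by rw [abs_of_nonneg hM])
    _ ≤ (1 + M / r) * |u| := by linarith

lemma exp_neg_three_halves_mul_log {t : ℝ} (ht : 0 < t) :
    exp (-(3 / 2) * log t) = (t * √t)⁻¹ := by
  rw [show -(3 / 2) * log t = -log t + -log t / 2 by ring, exp_add, exp_half, exp_neg,
    exp_log ht, sqrt_inv, mul_inv]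

noncomputable def localisationPrefactor (a y B t : ℝ) : ℝ :=
  2 * t * (1 + (a * t + 3 / (2 * √2) * log t) / (B * √t / 2)) *
    exp (-(3 / 2) * log t + (3 / (2 * √2)) ^ 2 * log t ^ 2 / (2 * t) - (√2 + a) * y)

lemma abs_localisationIntegral_le {a y t B : ℝ} (ha : 0 < a) (ht : 1 ≤ t) (hB : 0 < B)
    (hy : |y| ≤ B * √t / 2) :
    |localisationIntegral a y t B| ≤ localisationPrefactor a y B t * exp (-B ^ 2 / 8) := by
  have ht0 : 0 < t := one_pos.trans_le ht
  set q := a * t - y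
  set r := B * √t / 2 with hr
  set M := a * t + 3 / (2 * √2) * log t
  set g := -(3 / 2) * log t + (3 / (2 * √2)) ^ 2 * log t ^ 2 / (2 * t) - (√2 + a) * y
  have hr0 : 0 < r := by positivity
  have hM : 0 ≤ M := by have := log_nonneg ht; positivity
  have hK : 0 ≤ (1 + M / r) * exp g := by positivity
  have hw := integrable_absGaussianTail ht0 r
  have key : ∀ x, ‖{x : ℝ | |x - a * t| > B * √t}.indicator
      (fun x => (x + y + 3 / (2 * √2) * log t) *
        exp (-(√2 * (x + y + 3 / (2 * √2) * log t))
          - (x + y + 3 / (2 * √2) * log t) ^ 2 / (2 * t)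
          + 3 * (x + y + 3 / (2 * √2) * log t) * log t / (2 * √2 * t)
          + (√2 + a) * x - a ^ 2 * t / 2)) x‖
      ≤ (1 + M / r) * exp g * absGaussianTail t r (x - q) := by
    intro x
    by_cases hx : x ∈ {x : ℝ | |x - a * t| > B * √t}
    · have hxq : r < |x - q| := by
        have : |x - a * t| ≤ |x - q| + |y| :=
          (congrArg abs (by ring : x - a * t = x - q - y)).trans_le (abs_sub _ _)
        simp only [mem_ofPred_eq] at hx
        linarith
      rw [indicator_of_mem hx, localisation_exponent_eq a y (log t) t x √2 (by positivity) ht0.ne',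
        exp_add, absGaussianTail, indicator_of_mem (show x - q ∈ {u | r < |u|} from hxq),
        Real.norm_eq_abs, abs_mul,
        abs_of_pos (by positivity : 0 < exp (-((x - q) ^ 2 / (2 * t))) * exp g)]
      have hz : x + y + 3 / (2 * √2) * log t = (x - q) + M := by ring
      rw [hz]
      calc |x - q + M| * (exp (-((x - q) ^ 2 / (2 * t))) * exp g)
          ≤ (1 + M / r) * |x - q| * (exp (-((x - q) ^ 2 / (2 * t))) * exp g) := by
            gcongr
            exact abs_add_le_one_add_div_mul hM hr0 hxq
        _ = _ := by ring
    · rw [indicator_of_notMem hx, norm_zero]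
      exact mul_nonneg hK (absGaussianTail_nonneg t r _)
  calc |localisationIntegral a y t B|
      ≤ ∫ x in Ioi 0, (1 + M / r) * exp g * absGaussianTail t r (x - q) :=
        (norm_integral_le_integral_norm _).trans <| integral_mono_of_nonneg
          (Eventually.of_forall fun _ => norm_nonneg _)
          ((hw.comp_sub_right q).const_mul _).integrableOn (Eventually.of_forall key)
    _ ≤ ∫ x, (1 + M / r) * exp g * absGaussianTail t r (x - q) :=
        setIntegral_le_integral ((hw.comp_sub_right q).const_mul _)
          (Eventually.of_forall fun x => mul_nonneg hK (absGaussianTail_nonneg t r _))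
    _ = localisationPrefactor a y B t * exp (-B ^ 2 / 8) := by
        rw [integral_const_mul, integral_sub_right_eq_self (absGaussianTail t r) q,
          integral_absGaussianTail ht0 hr0.le, localisationPrefactor]
        have : r ^ 2 / (2 * t) = B ^ 2 / 8 := by
          rw [hr, div_pow, mul_pow, sq_sqrt ht0.le]
          field_simp
          ring
        rw [this, neg_div]
        ring

lemma localisationPrefactor_eq {a y B t : ℝ} (hB : B ≠ 0) (ht : 0 < t) :
    localisationPrefactor a y B t =
      (2 / √t + 4 * a / B + 4 * (3 / (2 * √2)) / B * (log t / t)) *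
        exp ((3 / (2 * √2)) ^ 2 / 2 * (log t ^ 2 / t)) * exp (-(√2 + a) * y) := by
  rw [localisationPrefactor, sub_eq_add_neg, exp_add, exp_add, exp_neg_three_halves_mul_log ht,
    ← neg_mul]
  obtain ⟨s, hs, rfl⟩ : ∃ s, 0 < s ∧ t = s ^ 2 := ⟨√t, sqrt_pos.mpr ht, (sq_sqrt ht.le).symm⟩
  rw [sqrt_sq hs.le]
  field_simp
  ring

lemma tendsto_localisationPrefactor (a y : ℝ) {B : ℝ} (hB : B ≠ 0) :
    Tendsto (localisationPrefactor a y B) atTop (𝓝 (4 * a / B * exp (-(√2 + a) * y))) := by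
  have hlog (n : ℕ) : Tendsto (fun t => log t ^ n / t) atTop (𝓝 0) := by
    simpa using tendsto_pow_log_div_mul_add_atTop 1 0 n one_ne_zero
  have h := (((tendsto_const_nhds (x := (2 : ℝ))).div_atTop tendsto_sqrt_atTop).add_const
    (4 * a / B) |>.add (by simpa using (hlog 1).const_mul (4 * (3 / (2 * √2)) / B))).mul
    ((hlog 2).const_mul ((3 / (2 * √2)) ^ 2 / 2)).rexp |>.mul_const (exp (-(√2 + a) * y))
  simp only [mul_zero, zero_add, add_zero, exp_zero, mul_one] at h
  exact h.congr' <| (eventually_gt_atTop 0).mono fun t ht =>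
    (localisationPrefactor_eq hB ht).symm

lemma eventually_abs_localisationIntegral_le {a : ℝ} (y : ℝ) {B : ℝ} (ha : 0 < a) (hB : 0 < B) :
    ∀ᶠ t in atTop, |localisationIntegral a y t B| ≤
      localisationPrefactor a y B t * exp (-B ^ 2 / 8) := by
  filter_upwards [eventually_ge_atTop 1,
    (tendsto_sqrt_atTop.const_mul_atTop (half_pos hB)).eventually_ge_atTop |y|] with t ht hy
  exact abs_localisationIntegral_le ha ht hB (by linarith)

lemma limsup_le_of_eventually_abs_le {α : Type*} {l : Filter α} [l.NeBot] {f : α → ℝ} {c : ℝ}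
    (h : ∀ᶠ x in l, |f x| ≤ c) : limsup f l ≤ c :=
  limsup_le_of_le (isCoboundedUnder_le_of_eventually_le l (x := -c)
    (h.mono fun _ hx => (abs_le.mp hx).1)) (h.mono fun _ hx => (abs_le.mp hx).2)

/-- the real-analysis content of Proposition 7.3 of the paper. -/
theorem stmt_6 (a y : ℝ) (ha : 0 < a) :
    ∀ ε > (0:ℝ), ∃ B > (0:ℝ),
      Filter.limsup (fun t : ℝ => localisationIntegral a y t B) atTop ≤ ε := by
  intro ε hε
  obtain ⟨B, hBε, hB⟩ := (((tendsto_const_nhds (x := 4 * a * exp (-(√2 + a) * y))).div_atTop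
    tendsto_id).eventually_lt_const hε |>.and (eventually_gt_atTop 0)).exists
  refine ⟨B, hB, limsup_le_of_eventually_abs_le ?_⟩
  have hlim : 4 * a / B * exp (-(√2 + a) * y) * exp (-B ^ 2 / 8) < ε := by
    calc _ ≤ 4 * a / B * exp (-(√2 + a) * y) * 1 := by
          gcongr
          exact exp_le_one_iff.mpr (by nlinarith)
      _ < ε := by simpa [mul_div_right_comm] using hBε
  filter_upwards [eventually_abs_localisationIntegral_le y ha hB,
    ((tendsto_localisationPrefactor a y hB.ne').mul_const _).eventually_lt_const hlim] with t h1 h2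
  exact h1.trans h2.le
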